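/- Let P be a finite nonempty collection of cells in ℤ² and let [a,b] and [α,β] be two inner intervals of P, with anti-diagonal corners c,d and γ,δ respectively, such that the corner sets {a,b,c,d} and {α,β,γ,δ} share exactly two elements. Then for every P-order <^P on V(P), the S-polynomial S(f_{a,b}, f_{α,β}) reduces to 0 modulo the set G of all inner 2-minors of P with respect to the lexicographic order <^P_lex. -/

import Mathlib

namespace ClosedPathPaper

open MvPolynomial

/-- Lattice points of `ℤ²`; a cell is identified with its lower left corner. -/
abbrev Pt : Type := ℤ × ℤ

/-- The four vertices (corners) of the unit cell with lower left corner `a`. -/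
def cellVerts (a : Pt) : Set Pt :=
  {a, (a.1 + 1, a.2), (a.1, a.2 + 1), (a.1 + 1, a.2 + 1)}

/-- The vertex set `V(P)` of a collection of cells `P`. -/
def VP (P : Finset Pt) : Set Pt := ⋃ a ∈ P, cellVerts a

/-- `[a,b]` is a proper interval and every cell contained in it belongs to `P`. -/
def IsInnerInterval (P : Finset Pt) (a b : Pt) : Prop :=
  a.1 < b.1 ∧ a.2 < b.2 ∧
    ∀ c : Pt, a.1 ≤ c.1 → c.1 < b.1 → a.2 ≤ c.2 → c.2 < b.2 → c ∈ P

/-- The four corners of the proper interval `[a,b]`: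
diagonal corners `a, b` and anti-diagonal corners `c = (a.1, b.2)`, `d = (b.1, a.2)`. -/
def cornersOf (a b : Pt) : Finset Pt := {a, b, (a.1, b.2), (b.1, a.2)}

/-- The inner 2-minor `f_{a,b} = x_a x_b - x_c x_d` attached to the inner interval `[a,b]`. -/
noncomputable def innerMinor (K : Type*) [Field K] (a b : Pt) : MvPolynomial Pt K :=
  X a * X b - X (a.1, b.2) * X (b.1, a.2)

/-- The set `G` of all inner 2-minors of `P`. -/
def minorsSet (K : Type*) [Field K] (P : Finset Pt) : Set (MvPolynomial Pt K) :=
  {f | ∃ a b : Pt, IsInnerInterval P a b ∧ f = innerMinor K a b}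

/-- The polyomino ideal `I_P`. -/
noncomputable def polyoIdeal (K : Type*) [Field K] (P : Finset Pt) :
    Ideal (MvPolynomial Pt K) :=
  Ideal.span (minorsSet K P)

/-! ### Monomial orders -/

/-- Strict lexicographic comparison of exponent vectors induced by the
(strict total) order `po` on the variables. -/
def lexLt (po : Pt → Pt → Prop) (u v : Pt →₀ ℕ) : Prop :=
  ∃ w : Pt, u w < v w ∧ ∀ w' : Pt, po w w' → u w' = v w'

def lexLe (po : Pt → Pt → Prop) (u v : Pt →₀ ℕ) : Prop := u = v ∨ lexLt po u v

/-- `m` is the leading monomial of `f` with respect to the lexicographic order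
induced by `po`. -/
def IsLM {K : Type*} [Field K] (po : Pt → Pt → Prop) (f : MvPolynomial Pt K)
    (m : Pt →₀ ℕ) : Prop :=
  m ∈ f.support ∧ ∀ m' ∈ f.support, lexLe po m' m

/-- `sp` is the S-polynomial of `f` and `g` with respect to the lexicographic
order induced by `po`. -/
def IsSPoly {K : Type*} [Field K] (po : Pt → Pt → Prop) (f g sp : MvPolynomial Pt K) : Prop :=
  ∃ mf mg : Pt →₀ ℕ, IsLM po f mf ∧ IsLM po g mg ∧
    sp = monomial (mf ⊔ mg - mf) (f.coeff mf)⁻¹ * f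
       - monomial (mf ⊔ mg - mg) (g.coeff mg)⁻¹ * g

/-- `h` has a standard expression with respect to `G`, i.e. `h` reduces to `0`
modulo `G` with respect to the lexicographic order induced by `po`. -/
def ReducesToZero {K : Type*} [Field K] (po : Pt → Pt → Prop)
    (G : Set (MvPolynomial Pt K)) (h : MvPolynomial Pt K) : Prop :=
  ∃ (F : Finset (MvPolynomial Pt K)) (q : MvPolynomial Pt K → MvPolynomial Pt K),
    ↑F ⊆ G ∧ h = ∑ g ∈ F, q g * g ∧
    ∀ g ∈ F, ∀ m, IsLM po (q g * g) m → ∃ mh, IsLM po h mh ∧ lexLe po m mh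

/-- The exponent vector of `x_u x_v x_w`. -/
noncomputable def mono3 (u v w : Pt) : Pt →₀ ℕ :=
  Finsupp.single u 1 + Finsupp.single v 1 + Finsupp.single w 1

/-- The leading monomials, viewed as polynomials, of the members of `G`. -/
def leadingMonomials {K : Type*} [Field K] (po : Pt → Pt → Prop)
    (G : Set (MvPolynomial Pt K)) : Set (MvPolynomial Pt K) :=
  {f | ∃ g ∈ G, ∃ m, IsLM po g m ∧ f = monomial m (1 : K)}

/-- The initial ideal of `I` with respect to the lexicographic order induced by `po`. -/
noncomputable def initialIdeal {K : Type*} [Field K] (po : Pt → Pt → Prop)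
    (I : Ideal (MvPolynomial Pt K)) : Ideal (MvPolynomial Pt K) :=
  Ideal.span (leadingMonomials po (I : Set (MvPolynomial Pt K)))

/-- `G` is a Gröbner basis of `I`. -/
def IsGroebnerBasis {K : Type*} [Field K] (po : Pt → Pt → Prop)
    (G : Set (MvPolynomial Pt K)) (I : Ideal (MvPolynomial Pt K)) : Prop :=
  Ideal.span G = I ∧ Ideal.span (leadingMonomials po G) = initialIdeal po I

/-- `G` is the reduced Gröbner basis of `I` (up to normalizing signs). -/
def IsReducedGroebnerBasis {K : Type*} [Field K] (po : Pt → Pt → Prop)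
    (G : Set (MvPolynomial Pt K)) (I : Ideal (MvPolynomial Pt K)) : Prop :=
  IsGroebnerBasis po G I ∧
  (∀ g ∈ G, ∃ m, IsLM po g m ∧ (g.coeff m = 1 ∨ g.coeff m = -1)) ∧
  (∀ g ∈ G, ∀ g' ∈ G, g' ≠ g → ∀ m ∈ g.support, ∀ m', IsLM po g' m' → ¬ m' ≤ m)

/-! ### Closed paths and special configurations -/

/-- Two cells share a common edge. -/
def cellAdj (a b : Pt) : Prop :=
  b = (a.1 + 1, a.2) ∨ b = (a.1 - 1, a.2) ∨ b = (a.1, a.2 + 1) ∨ b = (a.1, a.2 - 1)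

/-- `P` is a closed path polyomino. -/
def IsClosedPath (P : Finset Pt) : Prop :=
  ∃ n : ℕ, 5 < n ∧ ∃ A : ZMod n → Pt,
    Function.Injective A ∧
    (∀ i, cellAdj (A i) (A (i + 1))) ∧
    (∀ i j : ZMod n, j ≠ i - 2 → j ≠ i - 1 → j ≠ i → j ≠ i + 1 → j ≠ i + 2 →
      cellVerts (A i) ∩ cellVerts (A j) = ∅) ∧
    ∀ c : Pt, c ∈ P ↔ ∃ i, A i = c

/-- The horizontal block of rank `m` whose leftmost cell is `a`. -/
def hBlockCells (a : Pt) (m : ℕ) : Finset Pt :=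
  (Finset.range m).image fun t : ℕ => (a.1 + (t : ℤ), a.2)

/-- The vertical block of rank `m` whose bottom cell is `a`. -/
def vBlockCells (a : Pt) (m : ℕ) : Finset Pt :=
  (Finset.range m).image fun t : ℕ => (a.1, a.2 + (t : ℤ))

/-- The vertex set of a finite set of cells. -/
def vertsOfCells (s : Finset Pt) : Set Pt := ⋃ c ∈ s, cellVerts c

/-- A W-pentomino of `P`: a horizontal block of rank two with leftmost cell `a₁`, a
vertical block of rank two with bottom cell `a₂`, and a middle cell `A` not belonging to the
two blocks, such that the vertex sets of the two blocks meet exactly in the lower right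
corner of `A`. -/
def IsWPentomino (P : Finset Pt) (a₁ a₂ A : Pt) : Prop :=
  hBlockCells a₁ 2 ⊆ P ∧ vBlockCells a₂ 2 ⊆ P ∧ A ∈ P ∧
  A ∉ hBlockCells a₁ 2 ∪ vBlockCells a₂ 2 ∧
  vertsOfCells (hBlockCells a₁ 2) ∩ vertsOfCells (vBlockCells a₂ 2) = {(A.1 + 1, A.2)}

/-- An RW-heptomino of `P`: a horizontal block of rank three with leftmost cell `a₁`, a
vertical block of rank three with bottom cell `a₂`, and a middle cell `A` not belonging to
the two blocks, such that the vertex sets of the two blocks meet exactly in the upper left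
corner of `A`. -/
def IsRWHeptomino (P : Finset Pt) (a₁ a₂ A : Pt) : Prop :=
  hBlockCells a₁ 3 ⊆ P ∧ vBlockCells a₂ 3 ⊆ P ∧ A ∈ P ∧
  A ∉ hBlockCells a₁ 3 ∪ vBlockCells a₂ 3 ∧
  vertsOfCells (hBlockCells a₁ 3) ∩ vertsOfCells (vBlockCells a₂ 3) = {(A.1, A.2 + 1)}

/-- An LD-horizontal skew tetromino of `P` (base point `p`): the cells
`p, p+(1,0), p+(1,1), p+(2,1)`. -/
def IsLDhTetromino (P : Finset Pt) (p : Pt) : Prop :=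
  p ∈ P ∧ (p.1 + 1, p.2) ∈ P ∧ (p.1 + 1, p.2 + 1) ∈ P ∧ (p.1 + 2, p.2 + 1) ∈ P

/-- An LD-vertical skew tetromino of `P` (base point `p`): the cells
`p, p+(0,1), p+(1,1), p+(1,2)`. -/
def IsLDvTetromino (P : Finset Pt) (p : Pt) : Prop :=
  p ∈ P ∧ (p.1, p.2 + 1) ∈ P ∧ (p.1 + 1, p.2 + 1) ∈ P ∧ (p.1 + 1, p.2 + 2) ∈ P

/-- An LD-horizontal skew hexomino of `P` (base point `p`): the cells
`p, p+(1,0), p+(2,0), p+(2,1), p+(3,1), p+(4,1)`. -/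
def IsLDhHexomino (P : Finset Pt) (p : Pt) : Prop :=
  p ∈ P ∧ (p.1 + 1, p.2) ∈ P ∧ (p.1 + 2, p.2) ∈ P ∧
  (p.1 + 2, p.2 + 1) ∈ P ∧ (p.1 + 3, p.2 + 1) ∈ P ∧ (p.1 + 4, p.2 + 1) ∈ P

/-- An LD-vertical skew hexomino of `P` (base point `p`): the cells
`p, p+(0,1), p+(0,2), p+(1,2), p+(1,3), p+(1,4)`. -/
def IsLDvHexomino (P : Finset Pt) (p : Pt) : Prop :=
  p ∈ P ∧ (p.1, p.2 + 1) ∈ P ∧ (p.1, p.2 + 2) ∈ P ∧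
  (p.1 + 1, p.2 + 2) ∈ P ∧ (p.1 + 1, p.2 + 3) ∈ P ∧ (p.1 + 1, p.2 + 4) ∈ P

/-- The total order `<¹` on `ℤ²`. -/
def lt1 (a b : Pt) : Prop := a.1 < b.1 ∨ (a.1 = b.1 ∧ a.2 < b.2)

/-- The P-order `<^Y` attached to a set `Y` of vertices. -/
def Ylt (Y : Set Pt) (a b : Pt) : Prop :=
  (a ∉ Y ∧ b ∈ Y) ∨ (a ∉ Y ∧ b ∉ Y ∧ lt1 a b) ∨ (a ∈ Y ∧ b ∈ Y ∧ lt1 a b)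

/-!
Two inner intervals with exactly two common corners `s, t` share the side `[s, t]`, and their
other two sides span a third inner interval (their union, or the difference of the two).
Writing the minors as `x_s x_u - x_t x_v` and `x_s x_w - x_t x_z`, the third one is
`x_u x_z - x_v x_w`. If the leading terms of the two minors share a variable, the S-polynomial
is `± x_t` or `± x_s` times the third minor; otherwise the leading terms are coprime and
Buchberger's first criterion applies.
-/

section Binomials

variable {σ : Type*} {s t u v w z : σ}

theorem sup_tsub_left_of_disjoint {m n : σ →₀ ℕ} (h : Disjoint m n) :
    m ⊔ n - m = n := by
  ext x
  have hx := DFunLike.congr_fun (disjoint_iff.mp h) x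
  simp only [Finsupp.inf_apply, bot_eq_zero, Finsupp.coe_zero, Pi.zero_apply] at hx
  simp only [Finsupp.tsub_apply, Finsupp.sup_apply]
  omega

noncomputable def mono2 (u v : σ) : σ →₀ ℕ := Finsupp.single u 1 + Finsupp.single v 1

theorem X_mul_X_sub_X_mul_X {R : Type*} [CommRing R] (s u t v : σ) :
    (X s * X u - X t * X v : MvPolynomial σ R)
      = monomial (mono2 s u) 1 + monomial (mono2 t v) (-1) := by
  rw [X, X, X, X, monomial_mul, monomial_mul, one_mul, map_neg, sub_eq_add_neg]
  rfl

theorem mono2_ne (hst : s ≠ t) (hsv : s ≠ v) : mono2 s u ≠ mono2 t v := by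
  intro h
  have := DFunLike.congr_fun h s
  simp [mono2, hst, hsv] at this

theorem mono2_sup_tsub (hsw : s ≠ w) (huw : u ≠ w) :
    mono2 s u ⊔ mono2 s w - mono2 s u = Finsupp.single w 1 := by
  classical
  ext x
  simp only [mono2, Finsupp.tsub_apply, Finsupp.sup_apply, Finsupp.add_apply,
    Finsupp.single_apply]
  split_ifs <;> simp_all

theorem disjoint_mono2 (hst : s ≠ t) (hsz : s ≠ z) (hut : u ≠ t) (huz : u ≠ z) :
    Disjoint (mono2 s u) (mono2 t z) := by
  classical
  rw [Finsupp.disjoint_iff]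
  refine Disjoint.mono Finsupp.support_single_add_single_subset
    Finsupp.support_single_add_single_subset ?_
  simp [hst.symm, hsz.symm, hut.symm, huz.symm]

variable {R : Type*} [CommSemiring R] {A B : σ →₀ ℕ} {a b : R}

theorem support_monomial_add_monomial [DecidableEq σ] (hAB : A ≠ B) (ha : a ≠ 0) (hb : b ≠ 0) :
    (monomial A a + monomial B b : MvPolynomial σ R).support = {A, B} := by
  ext m
  by_cases hA : A = m <;> by_cases hB : B = m <;> simp_all [coeff_monomial, eq_comm]

theorem coeff_monomial_add_monomial_left (hAB : A ≠ B) :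
    (monomial A a + monomial B b : MvPolynomial σ R).coeff A = a := by
  classical
  simp [coeff_monomial, hAB.symm]

theorem coeff_monomial_add_monomial_right (hAB : A ≠ B) :
    (monomial A a + monomial B b : MvPolynomial σ R).coeff B = b := by
  classical
  simp [coeff_monomial, hAB]

theorem monomial_inv_eq_C_mul {K : Type*} [Field K] {c₁ d₁ : K} (hc₁ : c₁ ≠ 0) (hd₁ : d₁ ≠ 0)
    (n : σ →₀ ℕ) :
    (monomial n c₁⁻¹ : MvPolynomial σ K) = C (c₁ * d₁)⁻¹ * monomial n d₁ := by
  rw [C_mul_monomial]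
  congr 1
  field_simp

end Binomials

/-- `Pt` with the linear order `po`: over it, `lexLt po` is Mathlib's colexicographic order. -/
def OrderedBy (_ : Pt → Pt → Prop) : Type := Pt

noncomputable instance (po : Pt → Pt → Prop) [IsStrictTotalOrder Pt po] :
    LinearOrder (OrderedBy po) :=
  open Classical in @linearOrderOfSTO Pt po _ _

def colexBy (po : Pt → Pt → Prop) (u : Pt →₀ ℕ) : Colex (OrderedBy po →₀ ℕ) := toColex u

section LexOrder

variable {po : Pt → Pt → Prop} {u v w : Pt →₀ ℕ}

theorem lexLt_irrefl (u : Pt →₀ ℕ) : ¬ lexLt po u u := by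
  rintro ⟨w, hw, -⟩
  exact hw.false

theorem ne_of_lexLt (h : lexLt po u v) : u ≠ v := by
  rintro rfl
  exact lexLt_irrefl u h

variable [IsStrictTotalOrder Pt po]

theorem lexLt_iff_colexBy_lt : lexLt po u v ↔ colexBy po u < colexBy po v := by
  rw [Finsupp.Colex.lt_iff]
  simp only [lexLt, and_comm]
  rfl

theorem lexLt_trans (h₁ : lexLt po u v) (h₂ : lexLt po v w) : lexLt po u w := by
  rw [lexLt_iff_colexBy_lt] at *
  exact h₁.trans h₂

theorem lexLt_trichotomy (u v : Pt →₀ ℕ) : lexLt po u v ∨ u = v ∨ lexLt po v u := by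
  simp only [lexLt_iff_colexBy_lt]
  exact (lt_trichotomy _ _).imp_right (Or.imp_left fun h => toColex.injective h)

theorem lexLt_add_left (h : lexLt po u v) (w : Pt →₀ ℕ) : lexLt po (w + u) (w + v) := by
  rw [lexLt_iff_colexBy_lt] at *
  exact add_lt_add_right h (colexBy po w)

end LexOrder

section LeadingMonomials

variable {K : Type*} [Field K] {po : Pt → Pt → Prop} {f g f₀ g₀ sp : MvPolynomial Pt K}
  {m m' A B : Pt →₀ ℕ} {a b : K}

theorem isLM_neg : IsLM po (-f) m ↔ IsLM po f m := by
  simp only [IsLM, support_neg]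

theorem IsLM.unique [IsStrictTotalOrder Pt po] (h : IsLM po f m) (h' : IsLM po f m') :
    m = m' := by
  rcases h'.2 m h.1 with rfl | hlt
  · rfl
  rcases h.2 m' h'.1 with rfl | hlt'
  · rfl
  exact absurd (lexLt_trans hlt hlt') (lexLt_irrefl m)

theorem isLM_monomial (ha : a ≠ 0) : IsLM po (monomial A a) A := by
  classical
  simp [IsLM, support_monomial, ha, lexLe]

theorem isLM_monomial_add_monomial_iff (hAB : A ≠ B) (ha : a ≠ 0) (hb : b ≠ 0) :
    IsLM po (monomial A a + monomial B b) m ↔ m = A ∧ lexLt po B A ∨ m = B ∧ lexLt po A B := by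
  simp only [IsLM, support_monomial_add_monomial hAB ha hb, Finset.mem_insert,
    Finset.mem_singleton, forall_eq_or_imp, forall_eq, lexLe]
  constructor
  · rintro ⟨rfl | rfl, h₁, h₂⟩
    · exact Or.inl ⟨rfl, h₂.resolve_left hAB.symm⟩
    · exact Or.inr ⟨rfl, h₁.resolve_left hAB⟩
  · rintro (⟨rfl, h⟩ | ⟨rfl, h⟩)
    · exact ⟨Or.inl rfl, Or.inl rfl, Or.inr h⟩
    · exact ⟨Or.inr rfl, Or.inr h, Or.inl rfl⟩

theorem isSPoly_neg_left : IsSPoly po (-f) g sp ↔ IsSPoly po f g sp := by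
  simp only [IsSPoly, isLM_neg, coeff_neg, inv_neg, map_neg, neg_mul_neg]

theorem isSPoly_neg_right : IsSPoly po f (-g) sp ↔ IsSPoly po f g sp := by
  simp only [IsSPoly, isLM_neg, coeff_neg, inv_neg, map_neg, neg_mul_neg]

theorem IsSPoly.of_eq_or_eq_neg (hsp : IsSPoly po f g sp) (hf : f = f₀ ∨ f = -f₀)
    (hg : g = g₀ ∨ g = -g₀) : IsSPoly po f₀ g₀ sp := by
  rcases hf with rfl | rfl <;> rcases hg with rfl | rfl <;>
    simpa only [isSPoly_neg_left, isSPoly_neg_right] using hsp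

end LeadingMonomials

section StandardExpressions

open scoped Pointwise

variable {K : Type*} [Field K] {po : Pt → Pt → Prop} {G : Set (MvPolynomial Pt K)}
  {sp f f₀ g h p q : MvPolynomial Pt K}

theorem mem_union_neg_of_eq_or_eq_neg (hf : f ∈ G) (h : f = f₀ ∨ f = -f₀) : f₀ ∈ G ∪ -G := by
  rcases h with rfl | rfl
  · exact Or.inl hf
  · exact Or.inr (Set.mem_neg.2 hf)

theorem exists_mem_mul_eq_mul (hh : h ∈ G ∪ -G) (q : MvPolynomial Pt K) :
    ∃ h' ∈ G, ∃ q', q' * h' = q * h ∧ ∀ m, IsLM po h' m ↔ IsLM po h m := by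
  rcases hh with hh | hh
  · exact ⟨h, hh, q, rfl, fun _ => Iff.rfl⟩
  · exact ⟨-h, hh, -q, neg_mul_neg q h, fun _ => isLM_neg⟩

theorem ReducesToZero.zero : ReducesToZero po G 0 :=
  ⟨∅, 0, by simp, by simp, by simp⟩

theorem ReducesToZero.of_eq_mul (hh : h ∈ G ∪ -G) (hsp : sp = q * h) :
    ReducesToZero po G sp := by
  obtain ⟨h', hh', q', hq', -⟩ := exists_mem_mul_eq_mul (po := po) hh q
  refine ⟨{h'}, fun _ => q', by simpa, by simp [hq', hsp], ?_⟩
  rintro _ hg m hm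
  rw [Finset.mem_singleton.mp hg, hq', ← hsp] at hm
  exact ⟨m, hm, Or.inl rfl⟩

theorem ReducesToZero.of_eq_mul_add_mul [IsStrictTotalOrder Pt po] {m n : Pt →₀ ℕ}
    (hf : f ∈ G ∪ -G) (hg : g ∈ G ∪ -G) (hlf : IsLM po f m) (hlg : IsLM po g n) (hmn : m ≠ n)
    (hsp : sp = p * f + q * g)
    (hpf : ∀ m', IsLM po (p * f) m' → ∃ mh, IsLM po sp mh ∧ lexLe po m' mh)
    (hqg : ∀ m', IsLM po (q * g) m' → ∃ mh, IsLM po sp mh ∧ lexLe po m' mh) :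
    ReducesToZero po G sp := by
  classical
  obtain ⟨f', hf', p', hpf', hlf'⟩ := exists_mem_mul_eq_mul (po := po) hf p
  obtain ⟨g', hg', q', hqg', hlg'⟩ := exists_mem_mul_eq_mul (po := po) hg q
  have hne : f' ≠ g' := by
    rintro rfl
    exact hmn (((hlf' m).2 hlf).unique ((hlg' n).2 hlg))
  refine ⟨{f', g'}, fun x => if x = f' then p' else q', ?_, ?_, ?_⟩
  · simp [Set.insert_subset_iff, hf', hg']
  · simp [Finset.sum_pair hne, hne.symm, hpf', hqg', hsp]
  · simp only [Finset.mem_insert, Finset.mem_singleton]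
    rintro x (rfl | rfl)
    · simpa [hpf'] using hpf
    · simpa [hne.symm, hqg'] using hqg

end StandardExpressions

section Buchberger

variable {K : Type*} [Field K] {po : Pt → Pt → Prop} [IsStrictTotalOrder Pt po]
  {G : Set (MvPolynomial Pt K)} {sp : MvPolynomial Pt K}
  {m₁ m₂ n₁ n₂ e : Pt →₀ ℕ} {c c₁ c₂ d₁ d₂ : K}

theorem isLM_monomial_mul_binomial (hc : c ≠ 0) (hc₁ : c₁ ≠ 0) (hc₂ : c₂ ≠ 0)
    (hm : lexLt po m₂ m₁) :
    IsLM po (monomial e c * (monomial m₁ c₁ + monomial m₂ c₂)) (e + m₁) := by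
  have hlt := lexLt_add_left hm e
  rw [mul_add, monomial_mul, monomial_mul, isLM_monomial_add_monomial_iff (ne_of_lexLt hlt).symm
    (mul_ne_zero hc hc₁) (mul_ne_zero hc hc₂)]
  exact Or.inl ⟨rfl, hlt⟩

theorem exists_isLM_monomial_add_monomial {A B : Pt →₀ ℕ} {a b : K} (ha : a ≠ 0) (hb : b ≠ 0)
    (h₀ : monomial A a + monomial B b ≠ 0) :
    ∃ mh, IsLM po (monomial A a + monomial B b) mh ∧ lexLe po A mh ∧ lexLe po B mh := by
  rcases lexLt_trichotomy (po := po) A B with h | rfl | h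
  · exact ⟨B, (isLM_monomial_add_monomial_iff (ne_of_lexLt h) ha hb).2 (Or.inr ⟨rfl, h⟩),
      Or.inr h, Or.inl rfl⟩
  · rw [← map_add] at h₀ ⊢
    exact ⟨A, isLM_monomial fun h => h₀ (by rw [h, map_zero]), Or.inl rfl, Or.inl rfl⟩
  · exact ⟨A, (isLM_monomial_add_monomial_iff (ne_of_lexLt h).symm ha hb).2 (Or.inl ⟨rfl, h⟩),
      Or.inl rfl, Or.inr h⟩

theorem binomial_sPoly_eq_tail_mul_add (hc₁ : c₁ ≠ 0) (hd₁ : d₁ ≠ 0) :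
    monomial n₁ c₁⁻¹ * (monomial m₁ c₁ + monomial m₂ c₂)
        - monomial m₁ d₁⁻¹ * (monomial n₁ d₁ + monomial n₂ d₂)
      = -monomial n₂ ((c₁ * d₁)⁻¹ * d₂) * (monomial m₁ c₁ + monomial m₂ c₂)
        + monomial m₂ ((c₁ * d₁)⁻¹ * c₂) * (monomial n₁ d₁ + monomial n₂ d₂) := by
  rw [monomial_inv_eq_C_mul hc₁ hd₁, monomial_inv_eq_C_mul hd₁ hc₁, mul_comm d₁ c₁,
    ← C_mul_monomial, ← C_mul_monomial]
  ring

theorem binomial_sPoly_eq_monomial_add_monomial (hc₁ : c₁ ≠ 0) (hd₁ : d₁ ≠ 0) :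
    monomial n₁ c₁⁻¹ * (monomial m₁ c₁ + monomial m₂ c₂)
        - monomial m₁ d₁⁻¹ * (monomial n₁ d₁ + monomial n₂ d₂)
      = monomial (m₂ + n₁) ((c₁ * d₁)⁻¹ * (c₂ * d₁))
        + monomial (n₂ + m₁) (-((c₁ * d₁)⁻¹ * (d₂ * c₁))) := by
  have h : monomial n₁ c₁⁻¹ * (monomial m₁ c₁ + monomial m₂ c₂)
        - monomial m₁ d₁⁻¹ * (monomial n₁ d₁ + monomial n₂ d₂)
      = C (c₁ * d₁)⁻¹ * (monomial m₂ c₂ * monomial n₁ d₁ - monomial n₂ d₂ * monomial m₁ c₁) := by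
    rw [monomial_inv_eq_C_mul hc₁ hd₁, monomial_inv_eq_C_mul hd₁ hc₁, mul_comm d₁ c₁]
    ring
  rw [h, monomial_mul, monomial_mul, mul_sub, C_mul_monomial, C_mul_monomial, sub_eq_add_neg,
    ← map_neg]

open scoped Pointwise in
/-- Buchberger's first criterion for binomials. -/
theorem reducesToZero_of_isSPoly_of_disjoint (hc₁ : c₁ ≠ 0) (hc₂ : c₂ ≠ 0) (hd₁ : d₁ ≠ 0)
    (hd₂ : d₂ ≠ 0) (hm : lexLt po m₂ m₁) (hn : lexLt po n₂ n₁) (hmn : Disjoint m₁ n₁)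
    (hf : monomial m₁ c₁ + monomial m₂ c₂ ∈ G ∪ -G)
    (hg : monomial n₁ d₁ + monomial n₂ d₂ ∈ G ∪ -G)
    (hsp : IsSPoly po (monomial m₁ c₁ + monomial m₂ c₂) (monomial n₁ d₁ + monomial n₂ d₂) sp) :
    ReducesToZero po G sp := by
  have hlf : IsLM po (monomial m₁ c₁ + monomial m₂ c₂) m₁ :=
    (isLM_monomial_add_monomial_iff (ne_of_lexLt hm).symm hc₁ hc₂).2 (Or.inl ⟨rfl, hm⟩)
  have hlg : IsLM po (monomial n₁ d₁ + monomial n₂ d₂) n₁ :=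
    (isLM_monomial_add_monomial_iff (ne_of_lexLt hn).symm hd₁ hd₂).2 (Or.inl ⟨rfl, hn⟩)
  obtain ⟨mf, mg, hlf', hlg', rfl⟩ := hsp
  have hmf := hlf'.unique hlf
  have hmg := hlg'.unique hlg
  subst mf mg
  rw [coeff_monomial_add_monomial_left (ne_of_lexLt hm).symm,
    coeff_monomial_add_monomial_left (ne_of_lexLt hn).symm, sup_tsub_left_of_disjoint hmn,
    sup_comm, sup_tsub_left_of_disjoint hmn.symm]
  by_cases h₀ : monomial n₁ c₁⁻¹ * (monomial m₁ c₁ + monomial m₂ c₂)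
      - monomial m₁ d₁⁻¹ * (monomial n₁ d₁ + monomial n₂ d₂) = 0
  · rw [h₀]
    exact ReducesToZero.zero
  have hk : (c₁ * d₁)⁻¹ ≠ 0 := inv_ne_zero (mul_ne_zero hc₁ hd₁)
  rw [binomial_sPoly_eq_monomial_add_monomial hc₁ hd₁] at h₀
  obtain ⟨mh, hmh, hA, hB⟩ := exists_isLM_monomial_add_monomial (po := po)
    (mul_ne_zero hk (mul_ne_zero hc₂ hd₁)) (neg_ne_zero.2 (mul_ne_zero hk (mul_ne_zero hd₂ hc₁))) h₀
  rw [← binomial_sPoly_eq_monomial_add_monomial hc₁ hd₁] at hmh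
  refine ReducesToZero.of_eq_mul_add_mul hf hg hlf hlg ?_
    (binomial_sPoly_eq_tail_mul_add hc₁ hd₁) ?_ ?_
  · -- `m₁ ≠ 0` since `m₂ < m₁`
    rintro rfl
    obtain ⟨w, hw, -⟩ := disjoint_self.mp hmn ▸ hm
    exact absurd hw (Nat.not_lt_zero _)
  · intro m hm'
    rw [neg_mul, isLM_neg] at hm'
    rw [hm'.unique (isLM_monomial_mul_binomial (mul_ne_zero hk hd₂) hc₁ hc₂ hm)]
    exact ⟨mh, hmh, hB⟩
  · intro m hm'
    rw [hm'.unique (isLM_monomial_mul_binomial (mul_ne_zero hk hc₂) hd₁ hd₂ hn)]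
    exact ⟨mh, hmh, hA⟩

end Buchberger

open scoped Pointwise in
theorem reducesToZero_of_isSPoly_of_common_pair {K : Type*} [Field K] {po : Pt → Pt → Prop}
    [IsStrictTotalOrder Pt po] {G : Set (MvPolynomial Pt K)} {sp : MvPolynomial Pt K}
    {s t u v w z : Pt} (hd : [s, t, u, v, w, z].Nodup)
    (hf : X s * X u - X t * X v ∈ G ∪ -G) (hg : X s * X w - X t * X z ∈ G ∪ -G)
    (hh : X u * X z - X v * X w ∈ G ∪ -G)
    (hsp : IsSPoly po (X s * X u - X t * X v) (X s * X w - X t * X z) sp) :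
    ReducesToZero po G sp := by
  simp only [List.nodup_cons, List.mem_cons, List.not_mem_nil, or_false, not_or,
    List.nodup_nil, and_true] at hd
  obtain ⟨⟨hst, hsu, hsv, hsw, hsz⟩, ⟨htu, htv, htw, htz⟩, ⟨-, huw, huz⟩, ⟨hvw, hvz⟩, -⟩ := hd
  have hf₁ := mono2_ne (u := u) (v := v) hst hsv
  have hg₁ := mono2_ne (u := w) (v := z) hst hsz
  have one_ne : (-1 : K) ≠ 0 := neg_ne_zero.2 one_ne_zero
  simp only [X_mul_X_sub_X_mul_X] at hf hg hsp
  obtain ⟨mf, mg, hlf, hlg, hsp'⟩ := id hsp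
  rw [isLM_monomial_add_monomial_iff hf₁ one_ne_zero one_ne] at hlf
  rw [isLM_monomial_add_monomial_iff hg₁ one_ne_zero one_ne] at hlg
  rcases hlf with ⟨rfl, hlf⟩ | ⟨rfl, hlf⟩ <;> rcases hlg with ⟨rfl, hlg⟩ | ⟨rfl, hlg⟩
  · refine ReducesToZero.of_eq_mul hh (q := X t) ?_
    rw [hsp', coeff_monomial_add_monomial_left hf₁, coeff_monomial_add_monomial_left hg₁,
      mono2_sup_tsub hsw huw, sup_comm, mono2_sup_tsub hsu (Ne.symm huw), ← X_mul_X_sub_X_mul_X,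
      ← X_mul_X_sub_X_mul_X, inv_one]
    change X w * _ - X u * _ = _
    ring
  · exact reducesToZero_of_isSPoly_of_disjoint one_ne_zero one_ne one_ne one_ne_zero hlf hlg
      (disjoint_mono2 hst hsz (Ne.symm htu) huz) hf (by rwa [add_comm] at hg)
      (by rwa [add_comm (monomial (mono2 s w) _)] at hsp)
  · exact reducesToZero_of_isSPoly_of_disjoint one_ne one_ne_zero one_ne_zero one_ne hlf hlg
      (disjoint_mono2 (Ne.symm hst) htw (Ne.symm hsv) hvw) (by rwa [add_comm] at hf) hg
      (by rwa [add_comm (monomial (mono2 s u) _)] at hsp)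
  · refine ReducesToZero.of_eq_mul hh (q := -X s) ?_
    rw [hsp', coeff_monomial_add_monomial_right hf₁, coeff_monomial_add_monomial_right hg₁,
      mono2_sup_tsub htz hvz, sup_comm, mono2_sup_tsub htv (Ne.symm hvz), ← X_mul_X_sub_X_mul_X,
      ← X_mul_X_sub_X_mul_X, inv_neg, inv_one, map_neg, map_neg]
    change -X z * _ - -X v * _ = _
    ring

section Geometry

theorem cornersOf_eq_product (a b : Pt) :
    cornersOf a b = ({a.1, b.1} : Finset ℤ) ×ˢ ({a.2, b.2} : Finset ℤ) := by
  ext ⟨x, y⟩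
  simp only [cornersOf, Finset.mem_insert, Finset.mem_singleton, Finset.mem_product,
    Prod.ext_iff]
  tauto

theorem eq_and_eq_of_card_inter_eq_two {p q p' q' : ℤ} (hpq : p < q) (hpq' : p' < q')
    (h : (({p, q} : Finset ℤ) ∩ {p', q'}).card = 2) : p = p' ∧ q = q' := by
  have hsub : ({p, q} : Finset ℤ) ⊆ {p', q'} := by
    have := Finset.eq_of_subset_of_card_le Finset.inter_subset_left
      (h.trans (Finset.card_pair hpq.ne).symm).ge
    exact this ▸ Finset.inter_subset_right
  have hp := hsub (by simp : p ∈ ({p, q} : Finset ℤ))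
  have hq := hsub (by simp : q ∈ ({p, q} : Finset ℤ))
  simp only [Finset.mem_insert, Finset.mem_singleton] at hp hq
  omega

theorem common_side_of_card_inter_cornersOf {a b α β : Pt} (ha : a.1 < b.1) (hb : a.2 < b.2)
    (hα : α.1 < β.1) (hβ : α.2 < β.2) (h : (cornersOf a b ∩ cornersOf α β).card = 2) :
    (a.1 = α.1 ∧ b.1 = β.1 ∧ (({a.2, b.2} : Finset ℤ) ∩ {α.2, β.2}).card = 1) ∨
      (a.2 = α.2 ∧ b.2 = β.2 ∧ (({a.1, b.1} : Finset ℤ) ∩ {α.1, β.1}).card = 1) := by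
  rw [cornersOf_eq_product, cornersOf_eq_product, Finset.product_inter_product,
    Finset.card_product] at h
  rcases Nat.prime_two.eq_one_or_self_of_dvd _ (Dvd.intro _ h) with h₁ | h₁ <;>
    rw [h₁] at h
  · exact Or.inr ⟨(eq_and_eq_of_card_inter_eq_two hb hβ (by omega)).1,
      (eq_and_eq_of_card_inter_eq_two hb hβ (by omega)).2, h₁⟩
  · exact Or.inl ⟨(eq_and_eq_of_card_inter_eq_two ha hα h₁).1,
      (eq_and_eq_of_card_inter_eq_two ha hα h₁).2, by omega⟩

theorem exists_common_endpoint {p q p' q' : ℤ} (hpq : p < q) (hpq' : p' < q')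
    (h : (({p, q} : Finset ℤ) ∩ {p', q'}).card = 1) :
    ∃ e u w : ℤ, u ≠ w ∧ e ≠ u ∧ e ≠ w ∧ (p = e ∧ q = u ∨ p = u ∧ q = e) ∧
      (p' = e ∧ q' = w ∨ p' = w ∧ q' = e) := by
  obtain ⟨e, he⟩ := Finset.card_eq_one.mp h
  have hmem : ∀ x, (x = p ∨ x = q) ∧ (x = p' ∨ x = q') ↔ x = e := fun x => by
    simpa using Finset.ext_iff.mp he x
  have := hmem p; have := hmem q; have := hmem p'; have := hmem q'; have := hmem e
  exact ⟨e, p + q - e, p' + q' - e, by omega⟩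

end Geometry

/-- The identity or the transposition of coordinates: intervals with a common horizontal side
and intervals with a common vertical side are treated at once in these coordinates. -/
def IsAxisChart (pt : ℤ → ℤ → Pt) : Prop := pt = Prod.mk ∨ pt = fun i j => (j, i)

namespace IsAxisChart

variable {K : Type*} [Field K] {P : Finset Pt} {pt : ℤ → ℤ → Pt} {i i' j j' x x' p q e u w : ℤ}

theorem apply_eq_apply_iff (hpt : IsAxisChart pt) : pt i j = pt i' j' ↔ i = i' ∧ j = j' := by
  rcases hpt with rfl | rfl <;> simp [and_comm]

theorem innerMinor_eq (hpt : IsAxisChart pt) (i i' j j' : ℤ) :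
    innerMinor K (pt i j) (pt i' j') = X (pt i j) * X (pt i' j') - X (pt i j') * X (pt i' j) := by
  rcases hpt with rfl | rfl <;> simp only [innerMinor]
  ring

theorem isInnerInterval_iff (hpt : IsAxisChart pt) :
    IsInnerInterval P (pt i j) (pt i' j') ↔
      i < i' ∧ j < j' ∧ ∀ k l, i ≤ k → k < i' → j ≤ l → l < j' → pt k l ∈ P := by
  rcases hpt with rfl | rfl
  · simp only [IsInnerInterval, Prod.forall]
  · exact ⟨fun ⟨h₁, h₂, h⟩ => ⟨h₂, h₁, fun k l h₃ h₄ h₅ h₆ => h (l, k) h₅ h₆ h₃ h₄⟩,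
      fun ⟨h₁, h₂, h⟩ => ⟨h₂, h₁, fun c h₃ h₄ h₅ h₆ => h c.2 c.1 h₅ h₆ h₃ h₄⟩⟩

theorem innerMinor_eq_or_eq_neg (hpt : IsAxisChart pt) (h : p = e ∧ q = u ∨ p = u ∧ q = e) :
    innerMinor K (pt x p) (pt x' q) = X (pt x e) * X (pt x' u) - X (pt x' e) * X (pt x u) ∨
      innerMinor K (pt x p) (pt x' q) = -(X (pt x e) * X (pt x' u) - X (pt x' e) * X (pt x u)) := by
  rcases h with ⟨rfl, rfl⟩ | ⟨rfl, rfl⟩ <;> rw [hpt.innerMinor_eq] <;> [left; right] <;> ring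

open scoped Pointwise in
theorem mem_minorsSet_union_neg (hpt : IsAxisChart pt) (hx : x < x') (huw : u ≠ w)
    (hP : ∀ k l, x ≤ k → k < x' → min u w ≤ l → l < max u w → pt k l ∈ P) :
    X (pt x' u) * X (pt x w) - X (pt x u) * X (pt x' w) ∈ minorsSet K P ∪ -minorsSet K P := by
  rcases lt_or_gt_of_ne huw with h | h
  · refine mem_union_neg_of_eq_or_eq_neg
      ⟨_, _, hpt.isInnerInterval_iff.2 ⟨hx, h, by simpa [h.le] using hP⟩, rfl⟩ (Or.inr ?_)
    rw [hpt.innerMinor_eq]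
    ring
  · refine mem_union_neg_of_eq_or_eq_neg
      ⟨_, _, hpt.isInnerInterval_iff.2 ⟨hx, h, by simpa [h.le] using hP⟩, rfl⟩ (Or.inl ?_)
    rw [hpt.innerMinor_eq]
    ring

end IsAxisChart

theorem reducesToZero_of_common_side {K : Type*} [Field K] {po : Pt → Pt → Prop}
    [IsStrictTotalOrder Pt po] {P : Finset Pt} {sp : MvPolynomial Pt K} {pt : ℤ → ℤ → Pt}
    (hpt : IsAxisChart pt) {x x' p q p' q' : ℤ}
    (hcard : (({p, q} : Finset ℤ) ∩ {p', q'}).card = 1)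
    (hf : IsInnerInterval P (pt x p) (pt x' q)) (hg : IsInnerInterval P (pt x p') (pt x' q'))
    (hsp : IsSPoly po (innerMinor K (pt x p) (pt x' q)) (innerMinor K (pt x p') (pt x' q')) sp) :
    ReducesToZero po (minorsSet K P) sp := by
  obtain ⟨hx, hpq, hfP⟩ := hpt.isInnerInterval_iff.1 hf
  obtain ⟨-, hpq', hgP⟩ := hpt.isInnerInterval_iff.1 hg
  obtain ⟨e, u, w, huw, heu, hew, hpqe, hpqe'⟩ := exists_common_endpoint hpq hpq' hcard
  have hfs := hpt.innerMinor_eq_or_eq_neg (K := K) (x := x) (x' := x') hpqe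
  have hgs := hpt.innerMinor_eq_or_eq_neg (K := K) (x := x) (x' := x') hpqe'
  -- each row between `u` and `w` is a row of one of the two given intervals
  have hh := hpt.mem_minorsSet_union_neg (K := K) hx huw fun k l h₁ h₂ h₃ h₄ =>
    if hl : p ≤ l ∧ l < q then hfP k l h₁ h₂ hl.1 hl.2
    else hgP k l h₁ h₂ (by omega) (by omega)
  refine reducesToZero_of_isSPoly_of_common_pair ?_
    (mem_union_neg_of_eq_or_eq_neg ⟨_, _, hf, rfl⟩ hfs)
    (mem_union_neg_of_eq_or_eq_neg ⟨_, _, hg, rfl⟩ hgs) hh (hsp.of_eq_or_eq_neg hfs hgs)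
  simp only [List.nodup_cons, List.mem_cons, List.not_mem_nil, or_false, not_or,
    List.nodup_nil, and_true, true_and, not_false_eq_true, hpt.apply_eq_apply_iff]
  omega

theorem sPoly_reducesToZero_of_two_common_corners_general
    (K : Type*) [Field K] (P : Finset Pt)
    (a b α β : Pt)
    (hab : IsInnerInterval P a b) (hαβ : IsInnerInterval P α β)
    (hcard : (cornersOf a b ∩ cornersOf α β).card = 2)
    (po : Pt → Pt → Prop) (hpo : IsStrictTotalOrder Pt po)
    (sp : MvPolynomial Pt K)
    (hsp : IsSPoly po (innerMinor K a b) (innerMinor K α β) sp) :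
    ReducesToZero po (minorsSet K P) sp := by
  obtain ⟨a₁, a₂⟩ := a
  obtain ⟨b₁, b₂⟩ := b
  obtain ⟨α₁, α₂⟩ := α
  obtain ⟨β₁, β₂⟩ := β
  rcases common_side_of_card_inter_cornersOf hab.1 hab.2.1 hαβ.1 hαβ.2.1 hcard with
    ⟨rfl, rfl, h⟩ | ⟨rfl, rfl, h⟩
  · exact reducesToZero_of_common_side (pt := Prod.mk) (Or.inl rfl) h hab hαβ hsp
  · exact reducesToZero_of_common_side (pt := fun i j => (j, i)) (Or.inr rfl) h hab hαβ hsp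

/-- if the corner sets of two inner intervals share exactly two elements,
then the S-polynomial of the attached inner 2-minors reduces to 0 modulo the set of all
inner 2-minors, for every P-order. -/
theorem sPoly_reducesToZero_of_two_common_corners
    (K : Type*) [Field K] (P : Finset Pt) (hP : P.Nonempty)
    (a b α β : Pt)
    (hab : IsInnerInterval P a b) (hαβ : IsInnerInterval P α β)
    (hcard : (cornersOf a b ∩ cornersOf α β).card = 2)
    (po : Pt → Pt → Prop) (hpo : IsStrictTotalOrder Pt po)
    (sp : MvPolynomial Pt K)
    (hsp : IsSPoly po (innerMinor K a b) (innerMinor K α β) sp) :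
    ReducesToZero po (minorsSet K P) sp :=
  sPoly_reducesToZero_of_two_common_corners_general K P a b α β hab hαβ hcard po hpo sp hsp

end ClosedPathPaper
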